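/- arXiv:1708.09109 — 2 statements merged into one kernel-verified Lean document; each statement's English description precedes it below -/
import Mathlib

section
/- Let 0 < q < 1, let n ≥ 2 and k ≥ 0 be integers, let μ ∈ Par_n be a partition, and let f(x_1,…,x_{n−1}) be a polynomial that is homogeneous of degree d. Then ∫_{0≤x_1≤⋯≤x_n≤1} x_n^k f(x_1,…,x_{n−1}) a_{μ+δ_n}(x_1,…,x_n) d_q x_1 ⋯ d_q x_n = ((1−q)/(1 − q^{|μ|+C(n+1,2)+k+d})) · ∑_{ℓ=1}^n (−1)^{n−ℓ} ∫_{0≤x_1≤⋯≤x_{n−1}≤1} f(x_1,…,x_{n−1}) a_{μ̂^{(ℓ)}+δ_{n−1}}(x_1,…,x_{n−1}) d_q x_1 ⋯ d_q x_{n−1}, where C(n+1,2) = n(n+1)/2 is the binomial coefficient. -/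
/-- The `q`-integral over the simplex `0 ≤ x_1 ≤ ⋯ ≤ x_n ≤ 1`:
`∫ f d_q x = (1-q)^n ∑_{μ ∈ Par_n} q^{|μ|} f(q^{μ_1},…,q^{μ_n})`,
the sum over all partitions `μ` with at most `n` parts. -/
noncomputable def qint (q : ℝ) (n : ℕ) (f : (Fin n → ℝ) → ℝ) : ℝ :=
  (1 - q) ^ n *
    ∑' μ : {μ : Fin n → ℕ // Antitone μ}, q ^ (∑ i, μ.1 i) * f (fun i => q ^ (μ.1 i))

/-- The alternant `a_λ(x_1,…,x_n) = det(x_i^{λ_j})`. -/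
noncomputable def alt (n : ℕ) (lam : Fin n → ℕ) (x : Fin n → ℝ) : ℝ :=
  Matrix.det (Matrix.of fun i j : Fin n => x i ^ lam j)

/-- `λ + δ_n`, where `δ_n = (n-1, n-2, …, 1, 0)` is the staircase. -/
def stair (n : ℕ) (lam : Fin n → ℕ) : Fin n → ℕ :=
  fun j => lam j + (n - 1 - (j : ℕ))

/-- q-Pochhammer symbol `(a;q)_m = ∏_{i=0}^{m-1} (1 - a q^i)`. -/
noncomputable def qpoch (a q : ℝ) (m : ℕ) : ℝ :=
  ∏ i ∈ Finset.range m, (1 - a * q ^ i)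

/-- Parts of a partition `μ ∈ Par_n`, extended by `0` beyond index `n`
(`padF μ t` is the part `μ_{t+1}` in 1-based labelling). -/
def padF {n : ℕ} (μ : Fin n → ℕ) : ℕ → ℕ := fun t => if h : t < n then μ ⟨t, h⟩ else 0

/-- The partition `μ̂^{(ℓ)} ∈ Par_{n-1}` obtained from `μ ∈ Par_n`:
`μ̂^{(ℓ)}_i = μ_i + 1` for `i < ℓ` and `μ̂^{(ℓ)}_i = μ_{i+1}` for `i ≥ ℓ`
(here `ℓ : Fin n` encodes the 1-based index `ℓ+1`). -/
def muhat (n : ℕ) (μ : Fin n → ℕ) (ℓ : Fin n) : Fin (n - 1) → ℕ :=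
  fun i =>
    if (i : ℕ) < (ℓ : ℕ) then μ ⟨(i : ℕ), by have := i.isLt; omega⟩ + 1
    else μ ⟨(i : ℕ) + 1, by have := i.isLt; omega⟩


/-!
Split a partition `π ∈ Par_{m+1}` into its last part `c = π_{m+1}` and the partition
`ν = (π_i - c)_{i ≤ m} ∈ Par_m`. If `F` is homogeneous of degree `D`, the term of `π` in the
`q`-integral of `F` is `(q^(D+m+1))^c` times the term of `ν` in the `q`-integral of
`y ↦ F(y, 1)`, and summing the geometric series in `c` gives
`∫ F d_q x = (1-q)/(1-q^(D+m+1)) ∫ F(y, 1) d_q y`.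
For `F = x_n^k f a_{μ+δ_n}` one has `D + n = |μ| + C(n+1,2) + k + d`, and expanding
`a_{μ+δ_n}(y, 1)` along its last row produces the alternants `a_{μ̂^{(ℓ)}+δ_{n-1}}(y)`.
-/

open MvPolynomial

noncomputable def qintTerm (q : ℝ) {m : ℕ} (F : (Fin m → ℝ) → ℝ) (ν : Fin m → ℕ) : ℝ :=
  q ^ (∑ i, ν i) * F (fun i => q ^ ν i)

lemma qint_eq_tsum_qintTerm (q : ℝ) (m : ℕ) (F : (Fin m → ℝ) → ℝ) :
    qint q m F = (1 - q) ^ m * ∑' ν : {ν : Fin m → ℕ // Antitone ν}, qintTerm q F ν.1 :=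
  rfl

section Summability

variable {q : ℝ}

lemma summable_pow_sum (hq0 : 0 ≤ q) (hq1 : q < 1) :
    ∀ m : ℕ, Summable fun ν : Fin m → ℕ => q ^ (∑ i, ν i)
  | 0 => .of_finite
  | m + 1 => by
      have hcons := (summable_geometric_of_lt_one hq0 hq1).mul_of_nonneg
        (summable_pow_sum hq0 hq1 m) (fun c => pow_nonneg hq0 c) (fun ν => pow_nonneg hq0 _)
      refine ((Fin.consEquiv fun _ => ℕ).symm.summable_iff.mpr hcons).congr fun ν => ?_
      simp [Fin.sum_univ_succ, pow_add, Fin.tail]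

lemma summable_norm_qintTerm (hq0 : 0 ≤ q) (hq1 : q < 1) {m : ℕ} {F : (Fin m → ℝ) → ℝ}
    (hF : Continuous F) :
    Summable fun ν : Fin m → ℕ => ‖qintTerm q F ν‖ := by
  obtain ⟨C, hC⟩ := (isCompact_Icc (a := (0 : Fin m → ℝ)) (b := 1)).exists_bound_of_continuousOn
    hF.continuousOn
  refine .of_nonneg_of_le (fun ν => norm_nonneg _) (fun ν => ?_)
    ((summable_pow_sum hq0 hq1 m).mul_right C)
  rw [qintTerm, norm_mul, norm_pow, Real.norm_of_nonneg hq0]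
  exact mul_le_mul_of_nonneg_left
    (hC _ ⟨fun i => pow_nonneg hq0 _, fun i => pow_le_one₀ hq0 hq1.le⟩) (pow_nonneg hq0 _)

lemma qint_finset_sum_const_mul (hq0 : 0 ≤ q) (hq1 : q < 1) {m : ℕ} {ι : Type*} (s : Finset ι)
    (c : ι → ℝ) {F : ι → (Fin m → ℝ) → ℝ} (hF : ∀ j ∈ s, Continuous (F j)) :
    qint q m (fun x => ∑ j ∈ s, c j * F j x) = ∑ j ∈ s, c j * qint q m (F j) := by
  have hsum : ∀ j ∈ s, Summable fun ν : {ν : Fin m → ℕ // Antitone ν} => qintTerm q (F j) ν.1 :=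
    fun j hj => ((summable_norm_qintTerm hq0 hq1 (hF j hj)).of_norm).comp_injective
      Subtype.val_injective
  have hterm : ∀ ν : Fin m → ℕ,
      qintTerm q (fun x => ∑ j ∈ s, c j * F j x) ν = ∑ j ∈ s, c j * qintTerm q (F j) ν := by
    intro ν
    simp only [qintTerm, Finset.mul_sum]
    exact Finset.sum_congr rfl fun j _ => mul_left_comm _ _ _
  simp only [qint_eq_tsum_qintTerm, hterm]
  rw [Summable.tsum_finsetSum fun j hj => (hsum j hj).mul_left (c j), Finset.mul_sum]
  exact Finset.sum_congr rfl fun j _ => by rw [tsum_mul_left, mul_left_comm]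

end Summability

def antitoneSnocEquiv (m : ℕ) :
    ℕ × {ν : Fin m → ℕ // Antitone ν} ≃ {π : Fin (m + 1) → ℕ // Antitone π} where
  toFun p := ⟨Fin.snoc (fun i => p.2.1 i + p.1) p.1, by
    intro i j hij
    induction j using Fin.lastCases with
    | last =>
      induction i using Fin.lastCases with
      | last => exact le_rfl
      | cast i => simp
    | cast j =>
      induction i using Fin.lastCases with
      | last => exact absurd hij (by simp [Fin.le_def])
      | cast i =>
        simpa using p.2.2 (Fin.castSucc_le_castSucc_iff.mp hij)⟩
  invFun π := ⟨π.1 (Fin.last m), fun i => π.1 i.castSucc - π.1 (Fin.last m),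
    fun i j hij => Nat.sub_le_sub_right (π.2 (Fin.castSucc_le_castSucc_iff.mpr hij)) _⟩
  left_inv p := by
    ext <;> simp
  right_inv π := by
    ext i
    induction i using Fin.lastCases with
    | last => simp
    | cast i =>
      have : π.1 (Fin.last m) ≤ π.1 i.castSucc := π.2 (Fin.le_last _)
      simp only [Fin.snoc_castSucc]
      omega

lemma qintTerm_snoc_of_homogeneous (q : ℝ) {m D : ℕ} {F : (Fin (m + 1) → ℝ) → ℝ}
    (hF : ∀ (t : ℝ) x, F (fun i => t * x i) = t ^ D * F x) (c : ℕ) (ν : Fin m → ℕ) :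
    qintTerm q F (Fin.snoc (fun i => ν i + c) c) =
      (q ^ (D + m + 1)) ^ c * qintTerm q (fun y => F (Fin.snoc y 1)) ν := by
  have hpow : (fun i => q ^ (Fin.snoc (fun i => ν i + c) c : Fin (m + 1) → ℕ) i) =
      fun i => q ^ c * (Fin.snoc (fun i => q ^ ν i) 1 : Fin (m + 1) → ℝ) i := by
    funext i
    induction i using Fin.lastCases with
    | last => simp
    | cast i => simp [pow_add, mul_comm]
  have hsum :
      ∑ i, (Fin.snoc (fun i => ν i + c) c : Fin (m + 1) → ℕ) i = ∑ i, ν i + (m + 1) * c := by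
    simp only [Fin.sum_univ_castSucc, Fin.snoc_castSucc, Finset.sum_add_distrib, Finset.sum_const,
      Finset.card_univ, Fintype.card_fin, smul_eq_mul, Fin.snoc_last]
    ring
  rw [qintTerm, qintTerm, hpow, hF, hsum]
  ring

theorem qint_succ_of_homogeneous {q : ℝ} (hq0 : 0 ≤ q) (hq1 : q < 1) {m D : ℕ}
    {F : (Fin (m + 1) → ℝ) → ℝ} (hcont : Continuous F)
    (hF : ∀ (t : ℝ) x, F (fun i => t * x i) = t ^ D * F x) :
    qint q (m + 1) F = (1 - q) / (1 - q ^ (D + m + 1)) * qint q m (fun y => F (Fin.snoc y 1)) := by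
  have hr0 : 0 ≤ q ^ (D + m + 1) := pow_nonneg hq0 _
  have hr1 : q ^ (D + m + 1) < 1 := pow_lt_one₀ hq0 hq1 (by omega)
  have hgeom : Summable fun c : ℕ => ‖(q ^ (D + m + 1)) ^ c‖ := by
    simpa only [Real.norm_eq_abs] using (summable_geometric_of_lt_one hr0 hr1).abs
  have hrest : Summable fun ν : {ν : Fin m → ℕ // Antitone ν} =>
      ‖qintTerm q (fun y => F (Fin.snoc y 1)) ν.1‖ :=
    (summable_norm_qintTerm hq0 hq1
      (hcont.comp (continuous_id.finSnoc (A := fun _ => ℝ) continuous_const))).comp_injective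
        Subtype.val_injective
  rw [qint_eq_tsum_qintTerm, qint_eq_tsum_qintTerm, ← (antitoneSnocEquiv m).tsum_eq]
  simp only [antitoneSnocEquiv, Equiv.coe_fn_mk, qintTerm_snoc_of_homogeneous q hF]
  rw [← tsum_mul_tsum_of_summable_norm hgeom hrest, tsum_geometric_of_lt_one hr0 hr1,
    div_eq_mul_inv]
  ring

section Alternant

variable {m : ℕ}

lemma continuous_alt (lam : Fin m → ℕ) : Continuous (alt m lam) :=
  Continuous.matrix_det <| continuous_matrix fun i _ => (continuous_apply i).pow _

lemma alt_const_mul (lam : Fin m → ℕ) (t : ℝ) (x : Fin m → ℝ) :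
    alt m lam (fun i => t * x i) = t ^ (∑ j, lam j) * alt m lam x := by
  have hcols : (Matrix.of fun i j : Fin m => (t * x i) ^ lam j) =
      Matrix.of fun i j => t ^ lam j * (Matrix.of fun i j : Fin m => x i ^ lam j) i j := by
    ext i j
    simp [mul_pow]
  rw [alt, alt, hcols, Matrix.det_mul_row, Finset.prod_pow_eq_pow_sum]

lemma alt_snoc_one (lam : Fin (m + 1) → ℕ) (y : Fin m → ℝ) :
    alt (m + 1) lam (Fin.snoc y 1) =
      ∑ j : Fin (m + 1), (-1 : ℝ) ^ (m + (j : ℕ)) * alt m (fun j' => lam (j.succAbove j')) y := by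
  rw [alt, Matrix.det_succ_row _ (Fin.last m)]
  refine Finset.sum_congr rfl fun j _ => ?_
  simp [alt, Matrix.submatrix]

lemma sum_stair (n : ℕ) (lam : Fin n → ℕ) : ∑ j, stair n lam j = ∑ j, lam j + n.choose 2 := by
  unfold stair
  rw [Finset.sum_add_distrib, Fin.sum_univ_eq_sum_range (fun j => n - 1 - j),
    Finset.sum_range_reflect (fun j => j), Finset.sum_range_id, Nat.choose_two_right]

lemma stair_succAbove (κ : Fin (m + 1) → ℕ) (j : Fin (m + 1)) (j' : Fin m) :
    stair (m + 1) κ (j.succAbove j') = stair m (muhat (m + 1) κ j) j' := by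
  simp only [stair, muhat, Fin.succAbove, Fin.lt_def, Fin.val_castSucc]
  split_ifs <;> simp [Fin.castSucc, Fin.castAdd, Fin.castLE, Fin.succ] <;> omega

lemma alt_stair_snoc_one (κ : Fin (m + 1) → ℕ) (y : Fin m → ℝ) :
    alt (m + 1) (stair (m + 1) κ) (Fin.snoc y 1) =
      ∑ j : Fin (m + 1), (-1 : ℝ) ^ (m - (j : ℕ)) * alt m (stair m (muhat (m + 1) κ j)) y := by
  rw [alt_snoc_one]
  refine Finset.sum_congr rfl fun j _ => ?_
  have hsign : m + (j : ℕ) = m - j + 2 * j := by omega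
  simp only [hsign, pow_add, pow_mul, neg_one_sq, one_pow, mul_one, stair_succAbove]

end Alternant

lemma qint_pow_last_mul_eval_mul_alt_stair {q : ℝ} (hq0 : 0 ≤ q) (hq1 : q < 1) (m k d : ℕ)
    (μ : Fin (m + 1) → ℕ) (f : MvPolynomial (Fin m) ℝ)
    (hf : ∀ (t : ℝ) (x : Fin m → ℝ), eval (fun i => t * x i) f = t ^ d * eval x f) :
    qint q (m + 1) (fun x =>
        x (Fin.last m) ^ k * eval (fun i => x i.castSucc) f * alt (m + 1) (stair (m + 1) μ) x)
      = (1 - q) / (1 - q ^ ((∑ i, μ i) + (m + 2).choose 2 + k + d))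
          * ∑ ℓ : Fin (m + 1), (-1 : ℝ) ^ (m - (ℓ : ℕ))
              * qint q m (fun x => eval x f * alt m (stair m (muhat (m + 1) μ ℓ)) x) := by
  have hdeg : ∑ i, μ i + (m + 2).choose 2 + k + d = k + d + ∑ j, stair (m + 1) μ j + m + 1 := by
    rw [sum_stair, Nat.choose_succ_succ', Nat.choose_one_right]
    ring
  have hslice : (fun y : Fin m → ℝ => (Fin.snoc y 1 : Fin (m + 1) → ℝ) (Fin.last m) ^ k *
        eval (fun i => (Fin.snoc y 1 : Fin (m + 1) → ℝ) i.castSucc) f *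
        alt (m + 1) (stair (m + 1) μ) (Fin.snoc y 1)) =
      fun y => ∑ ℓ : Fin (m + 1), (-1 : ℝ) ^ (m - (ℓ : ℕ)) *
        (eval y f * alt m (stair m (muhat (m + 1) μ ℓ)) y) := by
    funext y
    simp only [Fin.snoc_last, one_pow, one_mul, Fin.snoc_castSucc, alt_stair_snoc_one,
      Finset.mul_sum]
    exact Finset.sum_congr rfl fun ℓ _ => mul_left_comm _ _ _
  have hcont : Continuous fun x : Fin (m + 1) → ℝ =>
      x (Fin.last m) ^ k * eval (fun i => x i.castSucc) f * alt (m + 1) (stair (m + 1) μ) x :=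
    (((continuous_apply _).pow k).mul ((continuous_eval f).comp
      (continuous_pi fun i => continuous_apply _))).mul (continuous_alt _)
  have hcont_slice (ℓ : Fin (m + 1)) :
      Continuous fun y => eval y f * alt m (stair m (muhat (m + 1) μ ℓ)) y :=
    (continuous_eval f).mul (continuous_alt _)
  rw [hdeg, qint_succ_of_homogeneous hq0 hq1 (D := k + d + ∑ j, stair (m + 1) μ j) hcont,
    hslice, qint_finset_sum_const_mul hq0 hq1 _ _ fun ℓ _ => hcont_slice ℓ]
  intro t x
  simp only [hf, alt_const_mul]
  ring

theorem stmt5 (q : ℝ) (hq0 : 0 < q) (hq1 : q < 1) (n k d : ℕ) (hn : 2 ≤ n)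
    (μ : Fin n → ℕ)
    (f : MvPolynomial (Fin (n - 1)) ℝ)
    (hf : ∀ (t : ℝ) (x : Fin (n - 1) → ℝ),
      MvPolynomial.eval (fun i => t * x i) f = t ^ d * MvPolynomial.eval x f) :
    qint q n (fun x =>
        x ⟨n - 1, by omega⟩ ^ k
          * MvPolynomial.eval (fun i : Fin (n - 1) => x (Fin.castLE (by omega) i)) f
          * alt n (stair n μ) x)
      = (1 - q) / (1 - q ^ ((∑ i, μ i) + (n + 1).choose 2 + k + d))
          * ∑ ℓ : Fin n, (-1 : ℝ) ^ (n - 1 - (ℓ : ℕ))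
              * qint q (n - 1) (fun x =>
                  MvPolynomial.eval x f * alt (n - 1) (stair (n - 1) (muhat n μ ℓ)) x) := by
  obtain ⟨m, rfl⟩ : ∃ m, n = m + 1 := ⟨n - 1, by omega⟩
  exact qint_pow_last_mul_eval_mul_alt_stair hq0.le hq1 m k d μ f hf
end

section
/- Let 0 < q < 1, let λ ∈ Par_2 and μ ∈ Par_3 be partitions. Then ∫_{0≤x_1≤x_2≤x_3≤1} x_1 (x_2 − x_3) a_{λ+δ_2}(x_1,x_2) a_{μ+δ_3}(x_1,x_2,x_3) d_q x_1 d_q x_2 d_q x_3 = (−1) q^{∑_{i=1}^2 i(λ_i+μ_{i+1})+7} (1−q)^4 (1 − q^{λ_1−λ_2+1}) (1 − q^{|λ|+|μ|+λ_1+10}) (1 − q^{|λ|+|μ|+λ_2+9}) / (1 − q^{|λ|+|μ|+9}) · ∏_{1≤i<j≤3}(1 − q^{μ_i−μ_j+j−i}) / ( ∏_{i=1}^2 ∏_{j=1}^3 (1 − q^{λ_i+μ_j+7−i−j}) ∏_{i=1}^3 (1 − q^{|λ|+|μ|−μ_i+4+i}) ). -/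
theorem alt_two (e : Fin 2 → ℕ) (x : Fin 2 → ℝ) :
    alt 2 e x = x 0 ^ e 0 * x 1 ^ e 1 - x 0 ^ e 1 * x 1 ^ e 0 := by
  simp [alt, Matrix.det_fin_two]

theorem alt_three (e : Fin 3 → ℕ) (x : Fin 3 → ℝ) :
    alt 3 e x = x 0 ^ e 0 * x 1 ^ e 1 * x 2 ^ e 2 - x 0 ^ e 0 * x 1 ^ e 2 * x 2 ^ e 1
      - x 0 ^ e 1 * x 1 ^ e 0 * x 2 ^ e 2 + x 0 ^ e 1 * x 1 ^ e 2 * x 2 ^ e 0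
      + x 0 ^ e 2 * x 1 ^ e 0 * x 2 ^ e 1 - x 0 ^ e 2 * x 1 ^ e 1 * x 2 ^ e 0 := by
  simp [alt, Matrix.det_fin_three]

def natTripleEquivPartition : ℕ × ℕ × ℕ ≃ {μ : Fin 3 → ℕ // Antitone μ} where
  toFun p := ⟨![p.1 + p.2.1 + p.2.2, p.2.1 + p.2.2, p.2.2], by
    intro i j hij
    fin_cases i <;> fin_cases j <;> simp_all⟩
  invFun μ := (μ.1 0 - μ.1 1, μ.1 1 - μ.1 2, μ.1 2)
  left_inv p := by ext <;> simp [add_assoc]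
  right_inv := by
    rintro ⟨μ, hμ⟩
    have h01 : μ 1 ≤ μ 0 := hμ (by decide)
    have h12 : μ 2 ≤ μ 1 := hμ (by decide)
    ext i
    fin_cases i <;> simp <;> omega

theorem qint_three_eq_tsum (q : ℝ) (f : (Fin 3 → ℝ) → ℝ) :
    qint q 3 f = (1 - q) ^ 3 * ∑' p : ℕ × ℕ × ℕ, q ^ (p.1 + 2 * p.2.1 + 3 * p.2.2)
      * f ![q ^ (p.1 + p.2.1 + p.2.2), q ^ (p.2.1 + p.2.2), q ^ p.2.2] := by
  rw [qint, ← natTripleEquivPartition.tsum_eq]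
  congr 1
  refine tsum_congr fun p => ?_
  congr 1
  · simp [natTripleEquivPartition, Fin.sum_univ_three]
    ring
  · congr 1
    ext i
    fin_cases i <;> rfl

theorem HasSum.mul_three {ι κ τ : Type*} {f : ι → ℝ} {g : κ → ℝ} {h : τ → ℝ} {a b c : ℝ}
    (hf : HasSum f a) (hg : HasSum g b) (hh : HasSum h c) :
    HasSum (fun p : ι × κ × τ => f p.1 * (g p.2.1 * h p.2.2)) (a * (b * c)) := by
  have hgh : HasSum (fun p : κ × τ => g p.1 * h p.2) (b * c) :=
    hg.mul hh (summable_mul_of_summable_norm hg.summable.norm hh.summable.norm)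
  exact hf.mul hgh (summable_mul_of_summable_norm hf.summable.norm hgh.summable.norm)

theorem one_sub_pow_ne_zero {q : ℝ} (hq0 : 0 ≤ q) (hq1 : q < 1) {k : ℕ} (hk : k ≠ 0) :
    1 - q ^ k ≠ 0 :=
  (sub_pos.2 (pow_lt_one₀ hq0 hq1 hk)).ne'

theorem pair_sum_identity {q : ℝ} (hq0 : 0 < q) (hq1 : q < 1) (l1 l2 n0 n1 n2 : ℕ) :
    ((1 - q ^ (l1 + l2 + n0 + n1 + 5))⁻¹ - (1 - q ^ (l1 + l2 + n0 + n1 + 4))⁻¹)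
        * ((1 - q ^ (l1 + n0 + 3))⁻¹ - (1 - q ^ (l2 + n0 + 2))⁻¹
          - ((1 - q ^ (l1 + n1 + 3))⁻¹ - (1 - q ^ (l2 + n1 + 2))⁻¹))
      + ((1 - q ^ (l1 + l2 + n0 + n2 + 5))⁻¹ - (1 - q ^ (l1 + l2 + n0 + n2 + 4))⁻¹)
        * ((1 - q ^ (l1 + n2 + 3))⁻¹ - (1 - q ^ (l2 + n2 + 2))⁻¹
          - ((1 - q ^ (l1 + n0 + 3))⁻¹ - (1 - q ^ (l2 + n0 + 2))⁻¹))
      + ((1 - q ^ (l1 + l2 + n1 + n2 + 5))⁻¹ - (1 - q ^ (l1 + l2 + n1 + n2 + 4))⁻¹)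
        * ((1 - q ^ (l1 + n1 + 3))⁻¹ - (1 - q ^ (l2 + n1 + 2))⁻¹
          - ((1 - q ^ (l1 + n2 + 3))⁻¹ - (1 - q ^ (l2 + n2 + 2))⁻¹))
    = -(q ^ (l1 + 2 * l2 + n1 + 2 * n2 + 6) * (1 - q) * (1 - q ^ ((l1 : ℤ) - l2 + 1))
        * ((1 - q ^ ((n0 : ℤ) - n1)) * (1 - q ^ ((n0 : ℤ) - n2)) * (1 - q ^ ((n1 : ℤ) - n2)))
        * (1 - q ^ (2 * l1 + l2 + n0 + n1 + n2 + 7)) * (1 - q ^ (l1 + 2 * l2 + n0 + n1 + n2 + 6)))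
      / ((1 - q ^ (l1 + n0 + 3)) * (1 - q ^ (l1 + n1 + 3)) * (1 - q ^ (l1 + n2 + 3))
        * (1 - q ^ (l2 + n0 + 2)) * (1 - q ^ (l2 + n1 + 2)) * (1 - q ^ (l2 + n2 + 2))
        * ((1 - q ^ (l1 + l2 + n0 + n1 + 4)) * (1 - q ^ (l1 + l2 + n0 + n2 + 4))
          * (1 - q ^ (l1 + l2 + n1 + n2 + 4)))) := by
  have hq : q ≠ 0 := hq0.ne'
  simp only [zpow_add₀ hq, zpow_sub₀ hq, zpow_natCast, zpow_one]
  field_simp [one_sub_pow_ne_zero hq0.le hq1]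
  ring

theorem qint_alternant_product {q : ℝ} (hq0 : 0 < q) (hq1 : q < 1) (l1 l2 n0 n1 n2 : ℕ) :
    qint q 3 (fun x =>
        x 0 * (x 1 - x 2) * alt 2 ![l1 + 1, l2] ![x 0, x 1] * alt 3 ![n0, n1, n2] x)
      = -1 * q ^ (l1 + 2 * l2 + n1 + 2 * n2 + 6) * (1 - q) ^ 4 * (1 - q ^ ((l1 : ℤ) - l2 + 1))
          * (1 - q ^ (2 * l1 + l2 + n0 + n1 + n2 + 7)) * (1 - q ^ (l1 + 2 * l2 + n0 + n1 + n2 + 6))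
          / (1 - q ^ (l1 + l2 + n0 + n1 + n2 + 6))
          * ((1 - q ^ ((n0 : ℤ) - n1)) * (1 - q ^ ((n0 : ℤ) - n2)) * (1 - q ^ ((n1 : ℤ) - n2)))
          / ((1 - q ^ (l1 + n0 + 3)) * (1 - q ^ (l1 + n1 + 3)) * (1 - q ^ (l1 + n2 + 3))
              * (1 - q ^ (l2 + n0 + 2)) * (1 - q ^ (l2 + n1 + 2)) * (1 - q ^ (l2 + n2 + 2))
            * ((1 - q ^ (l1 + l2 + n1 + n2 + 4)) * (1 - q ^ (l1 + l2 + n0 + n2 + 4))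
              * (1 - q ^ (l1 + l2 + n0 + n1 + 4)))) := by
  have geom (k : ℕ) (hk : k ≠ 0) : HasSum (fun a : ℕ => (q ^ k) ^ a) (1 - q ^ k)⁻¹ :=
    hasSum_geometric_of_lt_one (by positivity) (pow_lt_one₀ hq0.le hq1 hk)
  have inner (i j : ℕ) :=
    ((geom (l1 + i + 3) (by omega)).sub (geom (l2 + i + 2) (by omega))).sub
      ((geom (l1 + j + 3) (by omega)).sub (geom (l2 + j + 2) (by omega)))
  have middle (i j : ℕ) :=
    (geom (l1 + l2 + i + j + 5) (by omega)).sub (geom (l1 + l2 + i + j + 4) (by omega))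
  have outer := geom (l1 + l2 + n0 + n1 + n2 + 6) (by omega)
  have hsum := (((inner n0 n1).mul_three (middle n0 n1) outer).add
    ((inner n2 n0).mul_three (middle n0 n2) outer)).add ((inner n1 n2).mul_three (middle n1 n2) outer)
  rw [qint_three_eq_tsum, (hsum.congr_fun fun p => ?_).tsum_eq]
  · linear_combination (1 - q) ^ 3 * (1 - q ^ (l1 + l2 + n0 + n1 + n2 + 6))⁻¹
      * pair_sum_identity hq0 hq1 l1 l2 n0 n1 n2
  · simp only [alt_two, alt_three, Matrix.cons_val_zero, Matrix.cons_val_one, Matrix.cons_val_two,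
      Matrix.head_cons, Matrix.tail_cons]
    ring

theorem stmt12_general (q : ℝ) (hq0 : 0 < q) (hq1 : q < 1)
    (l1 l2 m1 m2 m3 : ℕ) :
    qint q 3 (fun x =>
        x 0 * (x 1 - x 2) * alt 2 ![l1 + 1, l2] ![x 0, x 1]
          * alt 3 ![m1 + 2, m2 + 1, m3] x)
      = (-1 : ℝ) * q ^ (l1 + 2 * l2 + m2 + 2 * m3 + 7) * (1 - q) ^ 4
          * (1 - q ^ ((l1 : ℤ) - l2 + 1))
          * (1 - q ^ (l1 + l2 + m1 + m2 + m3 + l1 + 10))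
          * (1 - q ^ (l1 + l2 + m1 + m2 + m3 + l2 + 9))
          / (1 - q ^ (l1 + l2 + m1 + m2 + m3 + 9))
          * ((1 - q ^ ((m1 : ℤ) - m2 + 1)) * (1 - q ^ ((m1 : ℤ) - m3 + 2))
              * (1 - q ^ ((m2 : ℤ) - m3 + 1)))
          / (((1 - q ^ (l1 + m1 + 5)) * (1 - q ^ (l1 + m2 + 4)) * (1 - q ^ (l1 + m3 + 3))
              * (1 - q ^ (l2 + m1 + 4)) * (1 - q ^ (l2 + m2 + 3)) * (1 - q ^ (l2 + m3 + 2)))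
            * ((1 - q ^ ((l1 : ℤ) + l2 + m1 + m2 + m3 - m1 + 5))
                * (1 - q ^ ((l1 : ℤ) + l2 + m1 + m2 + m3 - m2 + 6))
                * (1 - q ^ ((l1 : ℤ) + l2 + m1 + m2 + m3 - m3 + 7)))) := by
  rw [qint_alternant_product hq0 hq1,
    show ((m1 + 2 : ℕ) : ℤ) - (m2 + 1 : ℕ) = (m1 : ℤ) - m2 + 1 by push_cast; ring,
    show ((m1 + 2 : ℕ) : ℤ) - (m3 : ℕ) = (m1 : ℤ) - m3 + 2 by push_cast; ring,
    show ((m2 + 1 : ℕ) : ℤ) - (m3 : ℕ) = (m2 : ℤ) - m3 + 1 by push_cast; ring,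
    show (l1 : ℤ) + l2 + m1 + m2 + m3 - m1 + 5 = (l1 + l2 + m2 + m3 + 5 : ℕ) by push_cast; ring,
    show (l1 : ℤ) + l2 + m1 + m2 + m3 - m2 + 6 = (l1 + l2 + m1 + m3 + 6 : ℕ) by push_cast; ring,
    show (l1 : ℤ) + l2 + m1 + m2 + m3 - m3 + 7 = (l1 + l2 + m1 + m2 + 7 : ℕ) by push_cast; ring,
    zpow_natCast, zpow_natCast, zpow_natCast]
  ring

theorem stmt12 (q : ℝ) (hq0 : 0 < q) (hq1 : q < 1)
    (l1 l2 m1 m2 m3 : ℕ) (hl : l2 ≤ l1) (hm12 : m2 ≤ m1) (hm23 : m3 ≤ m2) :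
    qint q 3 (fun x =>
        x 0 * (x 1 - x 2) * alt 2 ![l1 + 1, l2] ![x 0, x 1]
          * alt 3 ![m1 + 2, m2 + 1, m3] x)
      = (-1 : ℝ) * q ^ (l1 + 2 * l2 + m2 + 2 * m3 + 7) * (1 - q) ^ 4
          * (1 - q ^ ((l1 : ℤ) - l2 + 1))
          * (1 - q ^ (l1 + l2 + m1 + m2 + m3 + l1 + 10))
          * (1 - q ^ (l1 + l2 + m1 + m2 + m3 + l2 + 9))
          / (1 - q ^ (l1 + l2 + m1 + m2 + m3 + 9))
          * ((1 - q ^ ((m1 : ℤ) - m2 + 1)) * (1 - q ^ ((m1 : ℤ) - m3 + 2))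
              * (1 - q ^ ((m2 : ℤ) - m3 + 1)))
          / (((1 - q ^ (l1 + m1 + 5)) * (1 - q ^ (l1 + m2 + 4)) * (1 - q ^ (l1 + m3 + 3))
              * (1 - q ^ (l2 + m1 + 4)) * (1 - q ^ (l2 + m2 + 3)) * (1 - q ^ (l2 + m3 + 2)))
            * ((1 - q ^ ((l1 : ℤ) + l2 + m1 + m2 + m3 - m1 + 5))
                * (1 - q ^ ((l1 : ℤ) + l2 + m1 + m2 + m3 - m2 + 6))
                * (1 - q ^ ((l1 : ℤ) + l2 + m1 + m2 + m3 - m3 + 7)))) :=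
  stmt12_general q hq0 hq1 l1 l2 m1 m2 m3
end
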